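/- Let R be a binary tree, let M be a model of the L-theory T_R, let φ(x₁,…,xₙ) be an L-formula in prenex normal form with radius r, and let ā and b̄ be n-tuples from M with the same r-type. Then M ⊨ φ(ā) if and only if M ⊨ φ(b̄). -/

import Mathlib

open FirstOrder FirstOrder.Language

/-- The function symbols of the language `L`: a constant `0` and unary functions `S`, `P`. -/
inductive LFunc : ℕ → Type
  | zero : LFunc 0
  | succ : LFunc 1
  | pred : LFunc 1

/-- The relation symbols of the language `L`: a unary relation `A`. -/
inductive LRel : ℕ → Type
  | A : LRel 1

/-- The first-order language with a constant symbol `0`, unary function symbols `S` and `P`,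
and a unary relation symbol `A`. -/
def L : Language := ⟨LFunc, LRel⟩

/-- The reduct `L₀` of `L` without the relation symbol `A`. -/
def L₀ : Language := ⟨LFunc, fun _ => Empty⟩

/-- The inclusion of `L₀` into `L`. -/
def incl : L₀ →ᴸ L where
  onFunction := fun {_} f => f
  onRelation := fun {_} r => Empty.elim r

/-- `ℤ` as an `L₀`-structure, interpreting `0` as zero, `S` as successor, `P` as predecessor. -/
instance intL0Structure : L₀.Structure ℤ where
  funMap := fun f v => match f with
    | .zero => 0
    | .succ => v 0 + 1
    | .pred => v 0 - 1
  RelMap := fun r _ => Empty.elim r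

/-- The `L`-term `0`. -/
def zeroT {α : Type*} : L.Term α := Term.func LFunc.zero ![]

/-- The `L`-term `S t`. -/
def succT {α : Type*} (t : L.Term α) : L.Term α := Term.func LFunc.succ ![t]

/-- The `L`-term `P t`. -/
def predT {α : Type*} (t : L.Term α) : L.Term α := Term.func LFunc.pred ![t]

/-- The `L`-term `Sᵏ t`. -/
def iterST {α : Type*} (k : ℕ) (t : L.Term α) : L.Term α := succT^[k] t

/-- The `L`-term `Pᵏ t`. -/
def iterPT {α : Type*} (k : ℕ) (t : L.Term α) : L.Term α := predT^[k] t

/-- The atomic `L`-formula `A t`. -/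
def Aform {α : Type*} (t : L.Term α) : L.Formula α := Relations.formula LRel.A ![t]

/-- The old (Mathlib, Dec 2024) `BoundedFormula.iSup` over a finset: disjunction of `f` over `s`. -/
noncomputable def finsetISup {α β : Type*} {n : ℕ} (s : Finset β) (f : β → L.BoundedFormula α n) :
    L.BoundedFormula α n :=
  (s.toList.map f).foldr (· ⊔ ·) ⊥

/-- The old (Mathlib, Dec 2024) `BoundedFormula.iInf` over a finset: conjunction of `f` over `s`. -/
noncomputable def finsetIInf {α β : Type*} {n : ℕ} (s : Finset β) (f : β → L.BoundedFormula α n) :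
    L.BoundedFormula α n :=
  (s.toList.map f).foldr (· ⊓ ·) ⊤

/-- The sentence asserting that the truth values of `A(0), A(S0), …, A(Sⁿ⁻¹0)` follow the
pattern `σ`. -/
noncomputable def patternSentence (n : ℕ) (σ : Fin n → Bool) : L.Sentence :=
  finsetIInf Finset.univ fun i : Fin n =>
    if σ i then Aform (iterST i zeroT) else (Aform (iterST i zeroT)).not

/-- The `n`-th tree axiom for `R`: the disjunction, over all length-`n` strings `σ ∈ R`, of
the sentence asserting that `A(0), …, A(Sⁿ⁻¹0)` follow the pattern `σ`. -/
noncomputable def treeAxiom (R : Set (List Bool)) (n : ℕ) : L.Sentence :=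
  letI := Classical.decPred fun σ : Fin n → Bool => List.ofFn σ ∈ R
  finsetISup (Finset.univ.filter fun σ : Fin n → Bool => List.ofFn σ ∈ R)
    (patternSentence n)

/-- The theory `T_R`: all `L₀`-sentences true in `(ℤ, 0, succ, pred)`, together with the
tree axioms for `R`. -/
noncomputable def TR (R : Set (List Bool)) : L.Theory :=
  incl.onTheory (L₀.completeTheory ℤ) ∪ Set.range (treeAxiom R)

/-- `R ⊆ List Bool` is a binary tree if it is closed under initial segments. -/
def IsBinaryTree (R : Set (List Bool)) : Prop :=
  ∀ σ ∈ R, ∀ τ : List Bool, τ <+: σ → τ ∈ R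

/-- The length-`n` initial segment of an infinite binary sequence `x : ℕ → Bool`. -/
def initSeg (x : ℕ → Bool) (n : ℕ) : List Bool :=
  List.ofFn fun i : Fin n => x i

/-- The interpretation of `S` in an `L`-structure. -/
def SM {M : Type*} [L.Structure M] (a : M) : M :=
  Structure.funMap (L := L) LFunc.succ ![a]

/-- The interpretation of `P` in an `L`-structure. -/
def PM {M : Type*} [L.Structure M] (a : M) : M :=
  Structure.funMap (L := L) LFunc.pred ![a]

/-- The interpretation of `0` in an `L`-structure. -/
def zeroM {M : Type*} [L.Structure M] : M :=
  Structure.funMap (L := L) LFunc.zero ![]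

/-- The interpretation of `A` in an `L`-structure. -/
def AM {M : Type*} [L.Structure M] (a : M) : Prop :=
  Structure.RelMap (L := L) LRel.A ![a]

/-- `a + k`: apply `S` (if `k ≥ 0`) or `P` (if `k < 0`) `|k|` many times to `a`. -/
def shift {M : Type*} [L.Structure M] (a : M) (k : ℤ) : M :=
  if 0 ≤ k then SM^[k.toNat] a else PM^[(-k).toNat] a

/-- `a` and `b` have the same `r`-neighborhood type: for every `k` with `|k| ≤ r`,
`A(a + k)` holds iff `A(b + k)` holds. -/
def SameNbhdType {M : Type*} [L.Structure M] (r : ℕ) (a b : M) : Prop :=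
  ∀ k : ℤ, |k| ≤ (r : ℤ) → (AM (shift a k) ↔ AM (shift b k))

/-- The tuples `a` and `b` (with the convention that the `0`-th coordinate is `0^M`) have the
same `r`-type: the same `r`-distance table (for all indices `i`, `j` and all `k` with
`|k| ≤ r`, the `j`-th coordinate equals the `i`-th coordinate plus `k` on one side iff it
does on the other) and the same `r`-neighborhood types coordinatewise. -/
def extTuple {M : Type*} [L.Structure M] {n : ℕ} (a : Fin n → M) : Fin (n + 1) → M :=
  Fin.cases zeroM a

/-- Same `r`-type of two tuples (see above). -/
def SameRType {M : Type*} [L.Structure M] {n : ℕ} (r : ℕ) (a b : Fin n → M) : Prop :=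
  (∀ i j : Fin (n + 1), ∀ k : ℤ, |k| ≤ (r : ℤ) →
      (extTuple a j = shift (extTuple a i) k ↔ extTuple b j = shift (extTuple b i) k)) ∧
  ∀ i : Fin n, SameNbhdType r (a i) (b i)

/-- The number of occurrences of `S` and `P` contributed by a single function symbol. -/
def funcWeight : ∀ {n : ℕ}, L.Functions n → ℕ
  | _, LFunc.zero => 0
  | _, LFunc.succ => 1
  | _, LFunc.pred => 1

/-- The total number of occurrences of `S` and `P` in a term. -/
def termRad {α : Type*} : L.Term α → ℕ
  | .var _ => 0
  | .func f ts => funcWeight f + Finset.univ.sum fun i => termRad (ts i)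

/-- The radius of a formula: for quantifier-free formulas, the total number of occurrences of
`S` and `P`; each quantifier doubles the radius. -/
def rad {α : Type*} : ∀ {n : ℕ}, L.BoundedFormula α n → ℕ
  | _, .falsum => 0
  | _, .equal t₁ t₂ => termRad t₁ + termRad t₂
  | _, .rel _ ts => Finset.univ.sum fun i => termRad (ts i)
  | _, .imp φ ψ => rad φ + rad ψ
  | _, .all φ => 2 * rad φ

/-!
The `L₀`-part of `T_R` makes `S` a bijection with inverse `P` and without cycles, so a model is
a disjoint union of `ℤ`-chains, on which every term evaluates to `x + k` (with `x` a variable or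
`0`) where `|k|` is at most the number of `S` and `P` in the term. Hence a quantifier-free formula
of radius `r` only sees the `r`-type of its arguments. Quantifiers are handled back-and-forth: if
`ā` and `b̄` have the same `2r`-type and `d` is a new element, there is a `c` with `ā c` and `b̄ d`
of the same `r`-type. When `d` is near some `bᵢ`, take `c` at the same offset from `aᵢ`; when `d`
is far from `b̄`, a counting argument shows that not every element with the neighbourhood type
of `d` can lie near `ā`.
-/

/-- `S` and `P` are mutually inverse and `S` has no cycles: `M` is a disjoint union of copies
of `(ℤ, succ, pred)`. -/
structure IsZChains (M : Type*) [L.Structure M] : Prop where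
  pred_succ : ∀ x : M, PM (SM x) = x
  succ_pred : ∀ x : M, SM (PM x) = x
  iterate_succ_ne : ∀ (m : ℕ) (x : M), SM^[m + 1] x ≠ x

section Shift

variable {M : Type*} [L.Structure M]

lemma shift_zero (x : M) : shift x 0 = x := rfl

lemma shift_one (x : M) : shift x 1 = SM x := rfl

lemma shift_neg_one (x : M) : shift x (-1) = PM x := rfl

lemma shift_natCast (x : M) (n : ℕ) : shift x n = SM^[n] x := by
  rw [shift, if_pos n.cast_nonneg, Int.toNat_natCast]

lemma shift_neg_natCast (x : M) (n : ℕ) : shift x (-n) = PM^[n] x := by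
  rcases Nat.eq_zero_or_pos n with rfl | hn
  · rfl
  · rw [shift, if_neg (by omega), neg_neg, Int.toNat_natCast]

namespace IsZChains

variable (hM : IsZChains M)
include hM

def succPerm : Equiv.Perm M := ⟨SM, PM, hM.pred_succ, hM.succ_pred⟩

lemma shift_eq_zpow (x : M) (k : ℤ) : shift x k = (hM.succPerm ^ k) x := by
  obtain ⟨n, rfl | rfl⟩ := Int.eq_nat_or_neg k
  · rw [shift_natCast, zpow_natCast, ← Equiv.Perm.iterate_eq_pow]
    rfl
  · rw [shift_neg_natCast, zpow_neg, zpow_natCast, ← inv_pow, ← Equiv.Perm.iterate_eq_pow]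
    rfl

lemma shift_add (x : M) (k l : ℤ) : shift (shift x k) l = shift x (k + l) := by
  simp only [hM.shift_eq_zpow, add_comm k, zpow_add, Equiv.Perm.mul_apply]

lemma shift_eq_shift_iff (x y : M) (k l : ℤ) : shift x k = shift y l ↔ x = shift y (l - k) := by
  rw [hM.shift_eq_zpow, hM.shift_eq_zpow, hM.shift_eq_zpow, ← Equiv.eq_symm_apply,
    ← Equiv.Perm.inv_def, ← zpow_neg, ← Equiv.Perm.mul_apply, ← zpow_add, neg_add_eq_sub]

lemma shift_eq_self_iff (x : M) (k : ℤ) : shift x k = x ↔ k = 0 := by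
  refine ⟨fun h => ?_, by rintro rfl; rfl⟩
  have hpos : ∀ j : ℤ, 0 < j → shift x j ≠ x := fun j hj => by
    obtain ⟨n, rfl⟩ := Int.eq_succ_of_zero_lt hj
    exact hM.iterate_succ_ne n x
  have hneg : shift x (-k) = x := by
    conv_lhs => rw [← h]
    rw [hM.shift_add, add_neg_cancel, shift_zero]
  rcases lt_trichotomy k 0 with hk | hk | hk
  · exact absurd hneg (hpos _ (neg_pos.mpr hk))
  · exact hk
  · exact absurd h (hpos _ hk)

end IsZChains

end Shift

section IntSentences

variable {α : Type*} {N : Type*} [L₀.Structure N]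

def succT₀ (t : L₀.Term α) : L₀.Term α := Functions.apply₁ LFunc.succ t

def predT₀ (t : L₀.Term α) : L₀.Term α := Functions.apply₁ LFunc.pred t

@[simp] lemma realize_succT₀ (t : L₀.Term α) (v : α → N) :
    (succT₀ t).realize v = Structure.funMap (L := L₀) LFunc.succ ![t.realize v] :=
  Term.realize_functions_apply₁

@[simp] lemma realize_predT₀ (t : L₀.Term α) (v : α → N) :
    (predT₀ t).realize v = Structure.funMap (L := L₀) LFunc.pred ![t.realize v] :=
  Term.realize_functions_apply₁

lemma realize_iterate_succT₀ (m : ℕ) (t : L₀.Term α) (v : α → N) :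
    (succT₀^[m] t).realize v =
      (fun x : N => Structure.funMap (L := L₀) LFunc.succ ![x])^[m] (t.realize v) := by
  induction m with
  | zero => rfl
  | succ m ih => rw [Function.iterate_succ_apply', Function.iterate_succ_apply', ← ih, realize_succT₀]

def predSuccSentence : L₀.Sentence := ∀' (predT₀ (succT₀ &0) =' &0)

def succPredSentence : L₀.Sentence := ∀' (succT₀ (predT₀ &0) =' &0)

def noCycleSentence (m : ℕ) : L₀.Sentence := ∀' ∼(succT₀^[m + 1] &0 =' &0)

@[simp] lemma int_funMap_succ (v : Fin 1 → ℤ) : Structure.funMap (L := L₀) LFunc.succ v = v 0 + 1 :=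
  rfl

@[simp] lemma int_funMap_pred (v : Fin 1 → ℤ) : Structure.funMap (L := L₀) LFunc.pred v = v 0 - 1 :=
  rfl

lemma int_models_predSuccSentence : (ℤ : Type) ⊨ predSuccSentence := fun x => by simp

lemma int_models_succPredSentence : (ℤ : Type) ⊨ succPredSentence := fun x => by simp

lemma int_models_noCycleSentence (m : ℕ) : (ℤ : Type) ⊨ noCycleSentence m := fun x => by
  simpa [realize_iterate_succT₀, add_assoc] using (by omega : (1 + m : ℤ) ≠ 0)

end IntSentences

lemma isZChains_of_models {R : Set (List Bool)} {M : Type*} [L.Structure M] (hM : M ⊨ TR R) :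
    IsZChains M := by
  let := incl.reduct M
  have : incl.IsExpansionOn M := LHom.isExpansionOn_reduct incl M
  have transfer (σ : L₀.Sentence) (hσ : (ℤ : Type) ⊨ σ) : M ⊨ σ :=
    (incl.realize_onSentence M σ).1 <| (TR R).realize_sentence_of_mem <|
      Set.mem_union_left _ (Set.mem_image_of_mem _ (mem_completeTheory.2 hσ))
  have hS (x : M) : Structure.funMap (L := L₀) LFunc.succ ![x] = SM x := rfl
  have hP (x : M) : Structure.funMap (L := L₀) LFunc.pred ![x] = PM x := rfl
  exact ⟨fun x => by simpa [Fin.snoc_zero, hS, hP] using transfer _ int_models_predSuccSentence x,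
    fun x => by simpa [Fin.snoc_zero, hS, hP] using transfer _ int_models_succPredSentence x,
    fun m x => by
      simpa [Fin.snoc_zero, hS, realize_iterate_succT₀] using
        transfer _ (int_models_noCycleSentence m) x⟩

section Types

variable {M : Type*} [L.Structure M] {κ κ' : Type*}

/-- `SameRType` for tuples indexed by an arbitrary type, without the implicit coordinate `0`. -/
structure SameType (r : ℕ) (U V : κ → M) : Prop where
  eq_shift_iff : ∀ i j : κ, ∀ k : ℤ, |k| ≤ (r : ℤ) → (U j = shift (U i) k ↔ V j = shift (V i) k)
  sameNbhdType : ∀ i : κ, SameNbhdType r (U i) (V i)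

lemma SameNbhdType.mono {r r' : ℕ} {a b : M} (h : SameNbhdType r a b) (hr : r' ≤ r) :
    SameNbhdType r' a b :=
  fun k hk => h k (hk.trans (by exact_mod_cast hr))

namespace SameType

variable {r : ℕ} {U V : κ → M}

lemma mono (h : SameType r U V) {r' : ℕ} (hr : r' ≤ r) : SameType r' U V :=
  ⟨fun i j k hk => h.eq_shift_iff i j k (hk.trans (by exact_mod_cast hr)),
    fun i => (h.sameNbhdType i).mono hr⟩

lemma symm (h : SameType r U V) : SameType r V U :=
  ⟨fun i j k hk => (h.eq_shift_iff i j k hk).symm, fun i k hk => (h.sameNbhdType i k hk).symm⟩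

lemma comp (h : SameType r U V) (f : κ' → κ) : SameType r (U ∘ f) (V ∘ f) :=
  ⟨fun i j => h.eq_shift_iff (f i) (f j), fun i => h.sameNbhdType (f i)⟩

end SameType

end Types

section Terms

variable {M : Type*} [L.Structure M] {α : Type*}

lemma funMap_zero (v : Fin 0 → M) : Structure.funMap (L := L) LFunc.zero v = zeroM := by
  rw [zeroM, Subsingleton.elim v (![] : Fin 0 → M)]

lemma funMap_succ (v : Fin 1 → M) : Structure.funMap (L := L) LFunc.succ v = SM (v 0) := by
  rw [SM]; congr; ext i; fin_cases i; rfl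

lemma funMap_pred (v : Fin 1 → M) : Structure.funMap (L := L) LFunc.pred v = PM (v 0) := by
  rw [PM]; congr; ext i; fin_cases i; rfl

lemma relMap_A (v : Fin 1 → M) : Structure.RelMap (L := L) LRel.A v = AM (v 0) := by
  rw [AM]; congr; ext i; fin_cases i; rfl

/-- A valuation of the variables `α`, extended by `none ↦ 0^M`. -/
abbrev withZero (v : α → M) : Option α → M := Option.elim' zeroM v

lemma IsZChains.exists_realize_eq_shift (hM : IsZChains M) (t : L.Term α) :
    ∃ (s : Option α) (k : ℤ), |k| ≤ (termRad t : ℤ) ∧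
      ∀ v : α → M, t.realize v = shift (withZero v s) k := by
  induction t with
  | var a => exact ⟨some a, 0, by simp, fun v => rfl⟩
  | func f ts ih =>
    simp only [termRad, Term.realize_func]
    cases f with
    | zero => exact ⟨none, 0, by simp, fun v => by rw [funMap_zero]; rfl⟩
    | succ =>
      obtain ⟨s, k, hk, hval⟩ := ih 0
      refine ⟨s, k + 1, ?_, fun v => ?_⟩
      · simp only [funcWeight, Fin.sum_univ_one, Nat.cast_add, Nat.cast_one]
        rw [abs_le] at *; omega
      · rw [funMap_succ, hval, ← shift_one, hM.shift_add]
    | pred =>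
      obtain ⟨s, k, hk, hval⟩ := ih 0
      refine ⟨s, k - 1, ?_, fun v => ?_⟩
      · simp only [funcWeight, Fin.sum_univ_one, Nat.cast_add, Nat.cast_one]
        rw [abs_le] at *; omega
      · rw [funMap_pred, hval, ← shift_neg_one, hM.shift_add, sub_eq_add_neg]

end Terms

section QF

variable {M : Type*} [L.Structure M] {α : Type*}

lemma IsZChains.realize_iff_of_isQF (hM : IsZChains M) {m : ℕ} {φ : L.BoundedFormula α m}
    (hφ : φ.IsQF) {v w : α → M} {xs ys : Fin m → M}
    (h : SameType (rad φ) (withZero (Sum.elim v xs)) (withZero (Sum.elim w ys))) :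
    φ.Realize v xs ↔ φ.Realize w ys := by
  induction hφ with
  | falsum => rfl
  | of_isAtomic hat =>
    cases hat with
    | equal t₁ t₂ =>
      obtain ⟨s₁, k₁, hk₁, hval₁⟩ := hM.exists_realize_eq_shift t₁
      obtain ⟨s₂, k₂, hk₂, hval₂⟩ := hM.exists_realize_eq_shift t₂
      simp only [BoundedFormula.realize_bdEqual, hval₁, hval₂, hM.shift_eq_shift_iff]
      refine h.eq_shift_iff s₂ s₁ (k₂ - k₁) ?_
      change |k₂ - k₁| ≤ ((termRad t₁ + termRad t₂ : ℕ) : ℤ)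
      push_cast
      rw [abs_le] at *; omega
    | rel R ts =>
      simp only [BoundedFormula.realize_rel]
      cases R
      obtain ⟨s, k, hk, hval⟩ := hM.exists_realize_eq_shift (ts 0)
      rw [relMap_A, relMap_A, hval, hval]
      refine h.sameNbhdType s k (hk.trans ?_)
      change (termRad (ts 0) : ℤ) ≤ ((∑ i : Fin 1, termRad (ts i) : ℕ) : ℤ)
      simp
  | imp _ _ ihφ ihψ =>
    exact imp_congr (ihφ (h.mono (Nat.le_add_right _ _))) (ihψ (h.mono (Nat.le_add_left _ _)))

end QF

namespace IsZChains

variable {M : Type*} [L.Structure M] (hM : IsZChains M) {κ : Type*} {r : ℕ} {U V : κ → M}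
include hM

lemma eq_shift_comm {x y : M} {k : ℤ} : y = shift x k ↔ x = shift y (-k) := by
  rw [eq_comm]
  simpa only [shift_zero, zero_sub] using hM.shift_eq_shift_iff x y k 0

lemma sameNbhdType_shift {x y : M} (h : SameNbhdType (2 * r) x y) {k : ℤ} (hk : |k| ≤ (r : ℤ)) :
    SameNbhdType r (shift x k) (shift y k) := fun t ht => by
  rw [hM.shift_add, hM.shift_add]
  exact h _ (by push_cast; rw [abs_le] at *; omega)

lemma sameType_elim' (h : SameType r U V) {c c' : M} (hc : SameNbhdType r c c')
    (hdist : ∀ i k, |k| ≤ (r : ℤ) → (c = shift (U i) k ↔ c' = shift (V i) k)) :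
    SameType r (Option.elim' c U) (Option.elim' c' V) := by
  refine ⟨?_, ?_⟩
  · rintro (_ | i) (_ | j) k hk
    · simp only [Option.elim'_none, eq_comm (a := c), eq_comm (a := c'), hM.shift_eq_self_iff]
    · simp only [Option.elim'_none, Option.elim'_some]
      rw [hM.eq_shift_comm (y := U j), hM.eq_shift_comm (y := V j)]
      exact hdist j (-k) (by rwa [abs_neg])
    · exact hdist i k hk
    · exact h.eq_shift_iff i j k hk
  · rintro (_ | i)
    · exact hc
    · exact h.sameNbhdType i

lemma exists_far_of_sameType [Finite κ] (h : SameType (2 * r) U V) {c' : M}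
    (hfar : ∀ i k, |k| ≤ (r : ℤ) → c' ≠ shift (V i) k) :
    ∃ c, (∀ i k, |k| ≤ (r : ℤ) → c ≠ shift (U i) k) ∧ SameNbhdType r c c' := by
  set D := {x | SameNbhdType r x c'}
  by_contra! hnear
  -- Then every `x ∈ D` is some `U i + k`, and `U i + k ↦ V i + k` maps the finite set `D`
  -- injectively into itself, hence onto `D ∋ c'`, contradicting that `c'` is far from `V`.
  have near : ∀ x ∈ D, ∃ p : κ × ℤ, |p.2| ≤ (r : ℤ) ∧ x = shift (U p.1) p.2 := by
    intro x hx
    by_contra! hfarx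
    exact hnear x (fun i k hk => hfarx (i, k) hk) hx
  have hc' : c' ∈ D := fun _ _ => Iff.rfl
  have : Nonempty (κ × ℤ) := ⟨(near c' hc').choose⟩
  choose! p hp using near
  let f x := shift (V (p x).1) (p x).2
  have hfin : D.Finite :=
    (Set.finite_range fun q : κ × Set.Icc (-(r : ℤ)) r => shift (U q.1) q.2).subset
      fun x hx => ⟨((p x).1, ⟨(p x).2, abs_le.1 (hp x hx).1⟩), (hp x hx).2.symm⟩
  have hmaps : Set.MapsTo f D D := fun x hx t ht =>
    calc AM (shift (f x) t) ↔ AM (shift (shift (U (p x).1) (p x).2) t) :=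
          ((hM.sameNbhdType_shift (h.sameNbhdType _) (hp x hx).1) t ht).symm
      _ ↔ AM (shift x t) := by rw [← (hp x hx).2]
      _ ↔ AM (shift c' t) := hx t ht
  have hinj : Set.InjOn f D := fun x hx y hy hxy => by
    rw [(hp x hx).2, (hp y hy).2, hM.shift_eq_shift_iff]
    rw [hM.shift_eq_shift_iff] at hxy
    refine (h.eq_shift_iff _ _ _ ?_).2 hxy
    have := (hp x hx).1
    have := (hp y hy).1
    push_cast
    rw [abs_le] at *; omega
  obtain ⟨x, hx, hfx⟩ := ((hfin.injOn_iff_bijOn_of_mapsTo hmaps).1 hinj).surjOn hc'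
  exact hfar _ _ (hp x hx).1 hfx.symm

lemma exists_sameType_elim' [Finite κ] (h : SameType (2 * r) U V) (c' : M) :
    ∃ c, SameType r (Option.elim' c U) (Option.elim' c' V) := by
  by_cases hnear : ∃ i k, |k| ≤ (r : ℤ) ∧ c' = shift (V i) k
  · obtain ⟨i, k, hk, rfl⟩ := hnear
    refine ⟨shift (U i) k, hM.sameType_elim' (h.mono (by omega))
      (hM.sameNbhdType_shift (h.sameNbhdType i) hk) fun j t ht => ?_⟩
    rw [hM.shift_eq_shift_iff, hM.shift_eq_shift_iff]
    exact h.eq_shift_iff j i (t - k) (by push_cast; rw [abs_le] at *; omega)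
  · push Not at hnear
    obtain ⟨c, hcfar, hc⟩ := hM.exists_far_of_sameType h hnear
    exact ⟨c, hM.sameType_elim' (h.mono (by omega)) hc
      fun i k hk => iff_of_false (hcfar i k hk) (hnear i k hk)⟩

end IsZChains

lemma forall_iff_forall_of_zigzag {β γ : Sort*} {p : β → Prop} {q : γ → Prop}
    (zig : ∀ a, ∃ b, p a ↔ q b) (zag : ∀ b, ∃ a, p a ↔ q b) : (∀ a, p a) ↔ ∀ b, q b :=
  ⟨fun h b => let ⟨a, ha⟩ := zag b; ha.1 (h a), fun h a => let ⟨b, hb⟩ := zig a; hb.2 (h b)⟩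

lemma exists_iff_exists_of_zigzag {β γ : Sort*} {p : β → Prop} {q : γ → Prop}
    (zig : ∀ a, ∃ b, p a ↔ q b) (zag : ∀ b, ∃ a, p a ↔ q b) : (∃ a, p a) ↔ ∃ b, q b :=
  ⟨fun ⟨a, ha⟩ => let ⟨b, hb⟩ := zig a; ⟨b, hb.1 ha⟩,
    fun ⟨b, hb⟩ => let ⟨a, ha⟩ := zag b; ⟨a, ha.2 hb⟩⟩

section Prenex

variable {M : Type*} [L.Structure M] {α : Type*} {m : ℕ}

/-- Reindexes the variables of `∀' φ` in terms of those of `φ` and the new element at `none`. -/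
def snocIndex (α : Type*) (m : ℕ) : Option (α ⊕ Fin (m + 1)) → Option (Option (α ⊕ Fin m))
  | none => some none
  | some (Sum.inl i) => some (some (Sum.inl i))
  | some (Sum.inr j) => Fin.lastCases none (fun j => some (some (Sum.inr j))) j

lemma elim'_comp_snocIndex (v : α → M) (xs : Fin m → M) (c : M) :
    Option.elim' c (withZero (Sum.elim v xs)) ∘ snocIndex α m =
      withZero (Sum.elim v (Fin.snoc xs c)) := by
  funext o
  rcases o with _ | i | j
  · rfl
  · rfl
  · induction j using Fin.lastCases <;> simp [snocIndex]

lemma rad_ex {n : ℕ} (φ : L.BoundedFormula α (n + 1)) : rad φ.ex = 2 * rad φ := rfl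

lemma IsZChains.exists_sameType_snoc (hM : IsZChains M) [Finite α] {r : ℕ} {v w : α → M}
    {xs ys : Fin m → M}
    (h : SameType (2 * r) (withZero (Sum.elim v xs)) (withZero (Sum.elim w ys))) (c' : M) :
    ∃ c, SameType r (withZero (Sum.elim v (Fin.snoc xs c)))
      (withZero (Sum.elim w (Fin.snoc ys c'))) :=
  let ⟨c, hc⟩ := hM.exists_sameType_elim' h c'
  ⟨c, by simpa only [elim'_comp_snocIndex] using hc.comp (snocIndex α m)⟩

lemma IsZChains.realize_iff_of_isPrenex (hM : IsZChains M) [Finite α] {φ : L.BoundedFormula α m}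
    (hφ : φ.IsPrenex) {v w : α → M} {xs ys : Fin m → M}
    (h : SameType (rad φ) (withZero (Sum.elim v xs)) (withZero (Sum.elim w ys))) :
    φ.Realize v xs ↔ φ.Realize w ys := by
  induction hφ with
  | of_isQF hφ => exact hM.realize_iff_of_isQF hφ h
  | all _ ih =>
    rw [BoundedFormula.realize_all, BoundedFormula.realize_all]
    exact forall_iff_forall_of_zigzag
      (fun c => (hM.exists_sameType_snoc h.symm c).imp fun _ hc => ih hc.symm)
      (fun c' => (hM.exists_sameType_snoc h c').imp fun _ hc => ih hc)
  | ex _ ih =>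
    rw [rad_ex] at h
    rw [BoundedFormula.realize_ex, BoundedFormula.realize_ex]
    exact exists_iff_exists_of_zigzag
      (fun c => (hM.exists_sameType_snoc h.symm c).imp fun _ hc => ih hc.symm)
      (fun c' => (hM.exists_sameType_snoc h c').imp fun _ hc => ih hc)

lemma SameRType.sameType {n r : ℕ} {a b : Fin n → M} (h : SameRType r a b) :
    SameType r (withZero (Sum.elim a (default : Fin 0 → M))) (withZero (Sum.elim b default)) := by
  let g : Option (Fin n ⊕ Fin 0) → Fin (n + 1) := Option.elim' 0 (Sum.elim Fin.succ finZeroElim)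
  have hg (c : Fin n → M) : extTuple c ∘ g = withZero (Sum.elim c default) := by
    funext o
    rcases o with _ | i | i
    · rfl
    · rfl
    · exact i.elim0
  have hext : SameType r (extTuple a) (extTuple b) := ⟨h.1, Fin.cases (fun _ _ => Iff.rfl) h.2⟩
  simpa only [hg] using hext.comp g

end Prenex

theorem indiscernability_general (R : Set (List Bool))
    (M : Type*) [L.Structure M] (hM : M ⊨ TR R) {n : ℕ} (φ : L.Formula (Fin n))
    (hφ : φ.IsPrenex) (a b : Fin n → M) (hab : SameRType (rad φ) a b) :
    φ.Realize a ↔ φ.Realize b :=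
  (isZChains_of_models hM).realize_iff_of_isPrenex hφ hab.sameType

/-- Indiscernibility principle: if `M ⊨ T_R`, `φ` is a prenex `L`-formula of radius `r`, and
`ā`, `b̄` are tuples with the same `r`-type, then `M ⊨ φ(ā) ↔ M ⊨ φ(b̄)`. -/
theorem indiscernability (R : Set (List Bool)) (hTree : IsBinaryTree R)
    (M : Type*) [L.Structure M] (hM : M ⊨ TR R) {n : ℕ} (φ : L.Formula (Fin n))
    (hφ : φ.IsPrenex) (a b : Fin n → M) (hab : SameRType (rad φ) a b) :
    φ.Realize a ↔ φ.Realize b :=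
  indiscernability_general R M hM φ hφ a b hab
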